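/- arXiv:2404.00627 — 6 statements merged into one kernel-verified Lean document; each statement's English description precedes it below -/
import Mathlib

section
/- Let (A, μ, R, d) be a modified Rota-Baxter AssDer pair of weight κ and (M, l, r, R_M, d_M) a bimodule of it. Then the semi-direct product A ⊕ M with multiplication μ_⋉(a+m, b+n) = μ(a,b) + l(a,n) + r(m,b), operator R_⋉(a+m) = R(a) + R_M(m), and map d_⋉(a+m) = d(a) + d_M(m) is a modified Rota-Baxter AssDer pair of weight κ. -/
/-- The semi-direct product of a modified Rota-Baxter AssDer pair of weight `κ`
by a bimodule of it is again a modified Rota-Baxter AssDer pair of weight `κ`. -/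
theorem stmt_2 {K A M : Type*} [Field K] [AddCommGroup A] [Module K A]
    [AddCommGroup M] [Module K M] (κ : K)
    (μ : A →ₗ[K] A →ₗ[K] A) (R d : A →ₗ[K] A)
    (l : A →ₗ[K] M →ₗ[K] M) (r : M →ₗ[K] A →ₗ[K] M) (RM dM : M →ₗ[K] M)
    (hassoc : ∀ a b c : A, μ (μ a b) c = μ a (μ b c))
    (hRB : ∀ a b : A, μ (R a) (R b) = R (μ (R a) b + μ a (R b)) + κ • μ a b)
    (hder : ∀ a b : A, d (μ a b) = μ (d a) b + μ a (d b))
    (hcom : ∀ a : A, R (d a) = d (R a))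
    -- bimodule axioms
    (hl : ∀ (a b : A) (m : M), l (μ a b) m = l a (l b m))
    (hlr : ∀ (a b : A) (m : M), l a (r m b) = r (l a m) b)
    (hr : ∀ (a b : A) (m : M), r m (μ a b) = r (r m a) b)
    (hRMl : ∀ (a : A) (m : M), l (R a) (RM m) = RM (l (R a) m + l a (RM m)) + κ • l a m)
    (hRMr : ∀ (a : A) (m : M), r (RM m) (R a) = RM (r (RM m) a + r m (R a)) + κ • r m a)
    (hdMl : ∀ (a : A) (m : M), dM (l a m) = l (d a) m + l a (dM m))
    (hdMr : ∀ (a : A) (m : M), dM (r m a) = r (dM m) a + r m (d a))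
    (hcomM : ∀ m : M, RM (dM m) = dM (RM m)) :
    ∀ (μs : A × M → A × M → A × M) (Rs ds : A × M → A × M),
      (μs = fun p q => (μ p.1 q.1, l p.1 q.2 + r p.2 q.1)) →
      (Rs = fun p => (R p.1, RM p.2)) →
      (ds = fun p => (d p.1, dM p.2)) →
      (∀ p q t : A × M, μs (μs p q) t = μs p (μs q t)) ∧
      (∀ p q : A × M, μs (Rs p) (Rs q) = Rs (μs (Rs p) q + μs p (Rs q)) + κ • μs p q) ∧
      (∀ p q : A × M, ds (μs p q) = μs (ds p) q + μs p (ds q)) ∧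
      (∀ p : A × M, Rs (ds p) = ds (Rs p)) := by
  intro μs Rs ds hμ hR hd
  subst hμ hR hd
  refine ⟨?_, ?_, ?_, ?_⟩
  · rintro ⟨a,m⟩ ⟨b,n⟩ ⟨c,p⟩
    simp only [Prod.mk.injEq, map_add, LinearMap.add_apply]
    constructor
    · exact hassoc a b c
    · rw [hl, hlr, hr]; abel
  · rintro ⟨a,m⟩ ⟨b,n⟩
    simp only [Prod.mk_add_mk, Prod.smul_mk, Prod.mk.injEq, map_add, LinearMap.add_apply,
      smul_add]
    constructor
    · rw [hRB]; simp [map_add]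
    · rw [hRMl, hRMr]; simp only [map_add]; abel
  · rintro ⟨a,m⟩ ⟨b,n⟩
    simp only [Prod.mk_add_mk, Prod.mk.injEq, map_add, LinearMap.add_apply]
    constructor
    · exact hder a b
    · rw [hdMl, hdMr]; abel
  · rintro ⟨a,m⟩
    exact Prod.ext (hcom a) (hcomM m)
end

section
/- Let (A, μ, R, d) be a modified Rota-Baxter AssDer pair of weight κ. Define the commutator bracket [a,b]_C = μ(a,b) - μ(b,a). Then (A, [-,-]_C, R, d) is a modified Rota-Baxter LieDer pair of weight κ: (A, [-,-]_C) is a Lie algebra, R satisfies [R(a),R(b)]_C = R([R(a),b]_C + [a,R(b)]_C) + κ [a,b]_C, d is a derivation of the bracket, and R ∘ d = d ∘ R. -/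
section Commutator

variable {K A : Type*} [CommRing K] [AddCommGroup A] [Module K A]

def commutatorBracket (μ : A →ₗ[K] A →ₗ[K] A) (a b : A) : A := μ a b - μ b a

def IsModifiedRotaBaxter (br : A → A → A) (R : A →ₗ[K] A) (κ : K) : Prop :=
  ∀ a b : A, br (R a) (R b) = R (br (R a) b + br a (R b)) + κ • br a b

def IsDerivationOf (br : A → A → A) (d : A →ₗ[K] A) : Prop :=
  ∀ a b : A, d (br a b) = br (d a) b + br a (d b)

variable (μ : A →ₗ[K] A →ₗ[K] A)

theorem commutatorBracket_self (a : A) : commutatorBracket μ a a = 0 :=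
  sub_self _

theorem commutatorBracket_antisymm (a b : A) :
    commutatorBracket μ a b = -commutatorBracket μ b a :=
  (neg_sub _ _).symm

theorem commutatorBracket_jacobi (hassoc : ∀ a b c : A, μ (μ a b) c = μ a (μ b c))
    (a b c : A) :
    commutatorBracket μ (commutatorBracket μ a b) c
      + commutatorBracket μ (commutatorBracket μ b c) a
      + commutatorBracket μ (commutatorBracket μ c a) b = 0 := by
  simp only [commutatorBracket, map_sub, LinearMap.sub_apply, hassoc]
  abel

theorem IsModifiedRotaBaxter.commutatorBracket {R : A →ₗ[K] A} {κ : K}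
    (hR : IsModifiedRotaBaxter (fun a b => μ a b) R κ) :
    IsModifiedRotaBaxter (commutatorBracket μ) R κ := by
  intro a b
  simp only [_root_.commutatorBracket, map_sub, map_add, smul_sub,
    hR a b, hR b a]
  abel

theorem IsDerivationOf.commutatorBracket {d : A →ₗ[K] A}
    (hd : IsDerivationOf (fun a b => μ a b) d) :
    IsDerivationOf (commutatorBracket μ) d := by
  intro a b
  simp only [_root_.commutatorBracket, map_sub, hd a b, hd b a]
  abel

end Commutator

/-- The commutator bracket of a modified Rota-Baxter AssDer pair of weight `κ`
gives a modified Rota-Baxter LieDer pair of weight `κ`. -/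
theorem stmt_3 {K A : Type*} [Field K] [AddCommGroup A] [Module K A] (κ : K)
    (μ : A →ₗ[K] A →ₗ[K] A) (R d : A →ₗ[K] A)
    (hassoc : ∀ a b c : A, μ (μ a b) c = μ a (μ b c))
    (hRB : ∀ a b : A, μ (R a) (R b) = R (μ (R a) b + μ a (R b)) + κ • μ a b)
    (hder : ∀ a b : A, d (μ a b) = μ (d a) b + μ a (d b))
    (hcom : ∀ a : A, R (d a) = d (R a)) :
    ∀ br : A → A → A, (br = fun a b => μ a b - μ b a) →
      (∀ a : A, br a a = 0) ∧
      (∀ a b : A, br a b = - br b a) ∧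
      (∀ a b c : A, br (br a b) c + br (br b c) a + br (br c a) b = 0) ∧
      (∀ a b : A, br (R a) (R b) = R (br (R a) b + br a (R b)) + κ • br a b) ∧
      (∀ a b : A, d (br a b) = br (d a) b + br a (d b)) ∧
      (∀ a : A, R (d a) = d (R a)) := by
  rintro _ rfl
  exact ⟨commutatorBracket_self μ, commutatorBracket_antisymm μ,
    commutatorBracket_jacobi μ hassoc, IsModifiedRotaBaxter.commutatorBracket μ hRB,
    IsDerivationOf.commutatorBracket μ hder, hcom⟩
end

section
/- Let (A, μ, R, d) be a modified Rota-Baxter AssDer pair of weight κ and (M, l, r, R_M, d_M) a bimodule over it. Define l̃(a,m) = l(R(a),m) - R_M(l(a,m)) and r̃(m,a) = r(m,R(a)) - R_M(r(m,a)). Then d_M satisfies d_M(l̃(a,m)) = l̃(d(a),m) + l̃(a,d_M(m)) and d_M(r̃(m,a)) = r̃(d_M(m),a) + r̃(m,d(a)) for all a ∈ A, m ∈ M; that is, (M, l̃, r̃, d_M) is a bimodule over the AssDer pair (A, μ_R, d). -/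
/-- For a bimodule `(M, l, r, R_M, d_M)` over a modified Rota-Baxter AssDer pair
`(A, μ, R, d)` of weight `κ`, the twisted actions `l̃(a,m) = l(R a, m) - R_M(l(a,m))`
and `r̃(m,a) = r(m, R a) - R_M(r(m,a))` are compatible with the derivations `d, d_M`. -/
theorem stmt_7 {K A M : Type*} [Field K] [AddCommGroup A] [Module K A]
    [AddCommGroup M] [Module K M] (κ : K)
    (μ : A →ₗ[K] A →ₗ[K] A) (R d : A →ₗ[K] A)
    (l : A →ₗ[K] M →ₗ[K] M) (r : M →ₗ[K] A →ₗ[K] M) (RM dM : M →ₗ[K] M)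
    (hassoc : ∀ a b c : A, μ (μ a b) c = μ a (μ b c))
    (hRB : ∀ a b : A, μ (R a) (R b) = R (μ (R a) b + μ a (R b)) + κ • μ a b)
    (hder : ∀ a b : A, d (μ a b) = μ (d a) b + μ a (d b))
    (hcom : ∀ a : A, R (d a) = d (R a))
    (hl : ∀ (a b : A) (m : M), l (μ a b) m = l a (l b m))
    (hlr : ∀ (a b : A) (m : M), l a (r m b) = r (l a m) b)
    (hr : ∀ (a b : A) (m : M), r m (μ a b) = r (r m a) b)
    (hRMl : ∀ (a : A) (m : M), l (R a) (RM m) = RM (l (R a) m + l a (RM m)) + κ • l a m)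
    (hRMr : ∀ (a : A) (m : M), r (RM m) (R a) = RM (r (RM m) a + r m (R a)) + κ • r m a)
    (hdMl : ∀ (a : A) (m : M), dM (l a m) = l (d a) m + l a (dM m))
    (hdMr : ∀ (a : A) (m : M), dM (r m a) = r (dM m) a + r m (d a))
    (hcomM : ∀ m : M, RM (dM m) = dM (RM m)) :
    ∀ (lt : A → M → M) (rt : M → A → M),
      (lt = fun a m => l (R a) m - RM (l a m)) →
      (rt = fun m a => r m (R a) - RM (r m a)) →
      (∀ (a : A) (m : M), dM (lt a m) = lt (d a) m + lt a (dM m)) ∧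
      (∀ (a : A) (m : M), dM (rt m a) = rt (dM m) a + rt m (d a)) := by
  rintro lt rt rfl rfl
  constructor <;> intro a m <;> simp only [map_sub, hdMl, hdMr, map_add, ← hcomM, ← hcom] <;>
    abel
end

section
/- Let (A, μ) be an associative algebra with derivation d, and (M, l, r, d_M) a bimodule with d_M(l(a,m)) = l(d(a),m) + l(a,d_M(m)) and d_M(r(m,a)) = r(d_M(m),a) + r(m,d(a)). For f : A⊗A → M define the Hochschild coboundary δ²(f)(a,b,c) = -l(a, f(b,c)) + r(f(a,b), c) + f(μ(a,b), c) - f(a, μ(b,c)) and the operator Δ²(f)(a,b) = f(d(a),b) + f(a,d(b)) - d_M(f(a,b)), and similarly Δ³ on 3-cochains. Then δ² ∘ Δ² = Δ³ ∘ δ² as maps from Hom(A⊗A, M) to Hom(A⊗A⊗A, M). -/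
/-- Hochschild coboundary in degree 2 (with the paper's sign conventions). -/
def hochDelta2 {K A M : Type*} [Field K] [AddCommGroup A] [Module K A]
    [AddCommGroup M] [Module K M]
    (μ : A →ₗ[K] A →ₗ[K] A) (l : A →ₗ[K] M →ₗ[K] M) (r : M →ₗ[K] A →ₗ[K] M)
    (f : A → A → M) : A → A → A → M :=
  fun a b c => -(l a (f b c)) + r (f a b) c + f (μ a b) c - f a (μ b c)

/-- The derivation-twisting operator `Δ²` on 2-cochains. -/
def derDelta2 {K A M : Type*} [Field K] [AddCommGroup A] [Module K A]
    [AddCommGroup M] [Module K M]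
    (d : A →ₗ[K] A) (dM : M →ₗ[K] M) (f : A → A → M) : A → A → M :=
  fun a b => f (d a) b + f a (d b) - dM (f a b)

/-- The derivation-twisting operator `Δ³` on 3-cochains. -/
def derDelta3 {K A M : Type*} [Field K] [AddCommGroup A] [Module K A]
    [AddCommGroup M] [Module K M]
    (d : A →ₗ[K] A) (dM : M →ₗ[K] M) (f : A → A → A → M) : A → A → A → M :=
  fun a b c => f (d a) b c + f a (d b) c + f a b (d c) - dM (f a b c)

/-- For an AssDer pair `(A, μ, d)` with bimodule `(M, l, r, d_M)`,
`δ² ∘ Δ² = Δ³ ∘ δ²` on 2-cochains `Hom(A ⊗ A, M)`. -/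
theorem stmt_11 {K A M : Type*} [Field K] [AddCommGroup A] [Module K A]
    [AddCommGroup M] [Module K M]
    (μ : A →ₗ[K] A →ₗ[K] A) (d : A →ₗ[K] A)
    (l : A →ₗ[K] M →ₗ[K] M) (r : M →ₗ[K] A →ₗ[K] M) (dM : M →ₗ[K] M)
    (hassoc : ∀ a b c : A, μ (μ a b) c = μ a (μ b c))
    (hder : ∀ a b : A, d (μ a b) = μ (d a) b + μ a (d b))
    (hl : ∀ (a b : A) (m : M), l (μ a b) m = l a (l b m))
    (hlr : ∀ (a b : A) (m : M), l a (r m b) = r (l a m) b)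
    (hr : ∀ (a b : A) (m : M), r m (μ a b) = r (r m a) b)
    (hdMl : ∀ (a : A) (m : M), dM (l a m) = l (d a) m + l a (dM m))
    (hdMr : ∀ (a : A) (m : M), dM (r m a) = r (dM m) a + r m (d a)) :
    ∀ f : A →ₗ[K] A →ₗ[K] M,
      hochDelta2 μ l r (derDelta2 d dM (fun a b => f a b))
        = derDelta3 d dM (hochDelta2 μ l r (fun a b => f a b)) := by
  intro f
  funext a b c
  simp only [hochDelta2, derDelta2, derDelta3, hder, map_add, map_sub, map_neg,
    hdMl, hdMr, LinearMap.add_apply, LinearMap.neg_apply, LinearMap.smul_apply]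
  abel_nf
  simp only [LinearMap.add_apply, LinearMap.smul_apply]
  abel
end

section
/- In the setting of the extension (A ⊕ M, μ_Θ, R_ξ, d_χ) with trivial bimodule M: the maps R_ξ and d_χ commute if and only if d_M(ξ(a)) - ξ(d(a)) + χ(R(a)) - R_M(χ(a)) = 0 for all a ∈ A. -/
/-- For the extension `A ⊕ M` with trivial bimodule `M`, the maps `R_ξ` and `d_χ`
commute iff `d_M(ξ a) - ξ(d a) + χ(R a) - R_M(χ a) = 0` for all `a`. -/
theorem stmt_18 {K A M : Type*} [Field K] [AddCommGroup A] [Module K A]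
    [AddCommGroup M] [Module K M]
    (R d : A →ₗ[K] A) (RM dM : M →ₗ[K] M)
    (ξ χ : A →ₗ[K] M)
    (hcom : ∀ a : A, R (d a) = d (R a))
    (hcomM : ∀ m : M, RM (dM m) = dM (RM m)) :
    ∀ (Rξ dχ : A × M → A × M),
      (Rξ = fun p => (R p.1, RM p.2 + ξ p.1)) →
      (dχ = fun p => (d p.1, dM p.2 + χ p.1)) →
      ((∀ p : A × M, Rξ (dχ p) = dχ (Rξ p)) ↔
        ∀ a : A, dM (ξ a) - ξ (d a) + χ (R a) - RM (χ a) = 0) := by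
  intro Rξ dχ hR hd
  subst hR hd
  constructor
  · intro h a
    have := h (a, 0)
    simp only [Prod.mk.injEq, map_zero, zero_add, map_add] at this
    linear_combination (norm := abel) -this.2
  · intro h p
    have := h p.1
    simp only [Prod.mk.injEq, map_add]
    refine ⟨hcom p.1, ?_⟩
    rw [hcomM]
    linear_combination (norm := abel) -this
end

section
/- In the setting of the extension (A ⊕ M, μ_Θ, R_ξ, d_χ) with trivial bimodule M and (A ⊕ M, μ_Θ) associative: R_ξ is a modified Rota-Baxter operator of weight κ for μ_Θ if and only if Θ(R(a),R(b)) - R_M(Θ(R(a),b)) - R_M(Θ(a,R(b))) - κ Θ(a,b) - ξ(μ(R(a),b) + μ(a,R(b))) = 0 for all a,b ∈ A. -/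
/-- For the extension `A ⊕ M` with trivial bimodule `M`, the map `R_ξ` is a
modified Rota-Baxter operator of weight `κ` for `μ_Θ` iff
`Θ(R a, R b) - R_M(Θ(R a, b)) - R_M(Θ(a, R b)) - κ Θ(a,b) - ξ(μ(R a, b) + μ(a, R b)) = 0`. -/
theorem stmt_19 {K A M : Type*} [Field K] [AddCommGroup A] [Module K A]
    [AddCommGroup M] [Module K M] (κ : K)
    (μ : A →ₗ[K] A →ₗ[K] A) (R : A →ₗ[K] A) (RM : M →ₗ[K] M)
    (Θ : A →ₗ[K] A →ₗ[K] M) (ξ : A →ₗ[K] M)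
    (hassoc : ∀ a b c : A, μ (μ a b) c = μ a (μ b c))
    (hRB : ∀ a b : A, μ (R a) (R b) = R (μ (R a) b + μ a (R b)) + κ • μ a b) :
    ∀ (μΘ : A × M → A × M → A × M) (Rξ : A × M → A × M),
      (μΘ = fun p q => (μ p.1 q.1, Θ p.1 q.1)) →
      (Rξ = fun p => (R p.1, RM p.2 + ξ p.1)) →
      ((∀ p q : A × M, μΘ (Rξ p) (Rξ q) = Rξ (μΘ (Rξ p) q + μΘ p (Rξ q)) + κ • μΘ p q) ↔
        ∀ a b : A,
          Θ (R a) (R b) - RM (Θ (R a) b) - RM (Θ a (R b)) - κ • Θ a b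
            - ξ (μ (R a) b + μ a (R b)) = 0) := by
  intro μΘ Rξ hμ hR
  subst hμ hR
  constructor
  · intro h a b
    have := congrArg Prod.snd (h (a, 0) (b, 0))
    simp only [Prod.smul_mk, Prod.mk_add_mk, Prod.snd] at this
    rw [this]
    simp [map_add]
    abel
  · intro h p q
    have := h p.1 q.1
    ext
    · simp [hRB]
    · simp only [Prod.mk_add_mk, Prod.smul_mk, Prod.snd]
      have h2 : Θ (R p.1) (R q.1) =
          RM (Θ (R p.1) q.1) + RM (Θ p.1 (R q.1)) + κ • Θ p.1 q.1
            + ξ (μ (R p.1) q.1 + μ p.1 (R q.1)) := by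
        have h3 := h p.1 q.1
        have h4 : Θ (R p.1) (R q.1) - (RM (Θ (R p.1) q.1) + RM (Θ p.1 (R q.1))
            + κ • Θ p.1 q.1 + ξ (μ (R p.1) q.1 + μ p.1 (R q.1))) = 0 := by
          rw [← h3]; abel
        rw [sub_eq_zero] at h4
        exact h4
      rw [h2]
      simp [map_add]
      abel
end
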